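/- arXiv:2105.06694 — 7 statements merged into one kernel-verified Lean document; each statement's English description precedes it below -/
import Mathlib

section
/- Let θ ∈ ℝ^N, α ∈ ℝ, and let L(θ) be the Kuramoto–Sakaguchi Jacobian with entries l_{ij} = (1/N)cos(θ_i − θ_j + α). Then the set V = { δ ∈ ℝ^N : Σ_{j=1}^N exp(i·θ_j)·δ_j = 0 } is a linear subspace of ℝ^N of dimension at least N − 2, and every δ ∈ V satisfies L(θ)·δ = 0; in particular, if Σ_{j=1}^N exp(i·θ_j) = 0 then 0 is an eigenvalue of L(θ) of geometric multiplicity at least N − 2. -/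
/-!
The phasor sum `δ ↦ Σⱼ exp(i θⱼ) δⱼ` is an `ℝ`-linear map `ℝ^N → ℂ`, so its kernel `V` has
codimension at most `dim_ℝ ℂ = 2`. Expanding `cos(θᵢ - θⱼ + α) = cos(θᵢ + α) cos θⱼ + sin(θᵢ + α) sin θⱼ`
shows that row `i` of `L(θ)` applied to `δ` is a combination of `Σⱼ cos θⱼ δⱼ` and `Σⱼ sin θⱼ δⱼ`,
the real and imaginary parts of the phasor sum, so `V ⊆ ker L(θ)`.
-/

open Matrix

theorem LinearMap.finrank_sub_finrank_le_finrank_ker {K V W : Type*} [DivisionRing K]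
    [AddCommGroup V] [Module K V] [AddCommGroup W] [Module K W]
    [FiniteDimensional K V] [FiniteDimensional K W] (f : V →ₗ[K] W) :
    Module.finrank K V - Module.finrank K W ≤ Module.finrank K (LinearMap.ker f) := by
  have := f.finrank_range_add_finrank_ker
  have := (LinearMap.range f).finrank_le
  omega

section Phasor

variable {ι : Type*} [Fintype ι]

noncomputable def phasorSum (θ : ι → ℝ) : (ι → ℝ) →ₗ[ℝ] ℂ where
  toFun δ := ∑ j, Complex.exp (Complex.I * (θ j : ℂ)) * (δ j : ℂ)
  map_add' x y := by simp only [Pi.add_apply, Complex.ofReal_add, mul_add, Finset.sum_add_distrib]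
  map_smul' c x := by
    simp only [Pi.smul_apply, smul_eq_mul, Complex.ofReal_mul, RingHom.id_apply,
      Complex.real_smul, Finset.mul_sum]
    exact Finset.sum_congr rfl fun _ _ => by ring

theorem phasorSum_apply (θ δ : ι → ℝ) :
    phasorSum θ δ = ∑ j, Complex.exp (Complex.I * (θ j : ℂ)) * (δ j : ℂ) := rfl

theorem re_phasorSum (θ δ : ι → ℝ) : (phasorSum θ δ).re = ∑ j, Real.cos (θ j) * δ j := by
  simp [phasorSum_apply, Complex.re_sum, mul_comm Complex.I, Complex.exp_mul_I, Complex.mul_re,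
    Complex.cos_ofReal_re]

theorem im_phasorSum (θ δ : ι → ℝ) : (phasorSum θ δ).im = ∑ j, Real.sin (θ j) * δ j := by
  simp [phasorSum_apply, Complex.im_sum, mul_comm Complex.I, Complex.exp_mul_I, Complex.mul_im,
    Complex.sin_ofReal_re]

theorem sum_cos_sub_mul (θ δ : ι → ℝ) (x : ℝ) :
    ∑ j, Real.cos (x - θ j) * δ j =
      Real.cos x * (phasorSum θ δ).re + Real.sin x * (phasorSum θ δ).im := by
  simp only [re_phasorSum, im_phasorSum, Finset.mul_sum, ← Finset.sum_add_distrib]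
  exact Finset.sum_congr rfl fun j _ => by rw [Real.cos_sub]; ring

theorem mulVec_eq_zero_of_phasorSum_eq_zero {θ : ι → ℝ} {α c : ℝ} {L : Matrix ι ι ℝ}
    (hL : ∀ i j, L i j = c * Real.cos (θ i - θ j + α)) {δ : ι → ℝ}
    (hδ : phasorSum θ δ = 0) : L *ᵥ δ = 0 := by
  funext i
  have hrow : (L *ᵥ δ) i = c * ∑ j, Real.cos ((θ i + α) - θ j) * δ j := by
    simp only [mulVec, dotProduct, hL, Finset.mul_sum, mul_assoc, sub_add_eq_add_sub]
  rw [hrow, sum_cos_sub_mul, hδ, Complex.zero_re, Complex.zero_im]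
  simp

end Phasor

/-- For the Kuramoto–Sakaguchi Jacobian `L(θ)` with entries `(1/N)·cos(θᵢ - θⱼ + α)`, the set
`V = {δ ∈ ℝ^N : Σⱼ exp(i θⱼ) δⱼ = 0}` is a linear subspace of dimension at least `N - 2`, and
every `δ ∈ V` satisfies `L(θ)·δ = 0`; in particular, if `Σⱼ exp(i θⱼ) = 0` then `0` is an
eigenvalue of `L(θ)` of geometric multiplicity at least `N - 2`. -/
theorem kuramoto_sakaguchi_jacobian_kernel (N : ℕ) (θ : Fin N → ℝ) (α : ℝ)
    (L : Matrix (Fin N) (Fin N) ℝ)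
    (hL : ∀ i j, L i j = (1 / N) * Real.cos (θ i - θ j + α)) :
    (∃ V : Submodule ℝ (Fin N → ℝ),
      (V : Set (Fin N → ℝ)) =
        {δ : Fin N → ℝ | ∑ j, Complex.exp (Complex.I * (θ j : ℂ)) * (δ j : ℂ) = 0} ∧
      N - 2 ≤ Module.finrank ℝ V ∧
      ∀ δ ∈ V, L.mulVec δ = 0) ∧
    ((∑ j, Complex.exp (Complex.I * (θ j : ℂ))) = 0 →
      N - 2 ≤ Module.finrank ℝ (LinearMap.ker L.mulVecLin)) := by
  have hrank : N - 2 ≤ Module.finrank ℝ (LinearMap.ker (phasorSum θ)) := by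
    simpa [Complex.finrank_real_complex] using (phasorSum θ).finrank_sub_finrank_le_finrank_ker
  have hker : LinearMap.ker (phasorSum θ) ≤ LinearMap.ker L.mulVecLin := fun δ hδ =>
    mulVec_eq_zero_of_phasorSum_eq_zero hL hδ
  refine ⟨⟨LinearMap.ker (phasorSum θ), rfl, hrank, hker⟩, fun _ => ?_⟩
  exact hrank.trans (Submodule.finrank_mono hker)
end

section
/- Let N ≥ 2, α ∈ ℝ, and θ ∈ ℝ^N with Σ_{j=1}^N exp(i·θ_j) = 0. Then the characteristic polynomial of the Kuramoto–Sakaguchi Jacobian L(θ) over ℂ factors as det(X·I_N − L(θ)) = X^{N−2} · ( X² − cos α · X + (1 − R₂(θ)²)/4 ). -/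
/-! With `u j = exp (i θ j)` and `w = exp (i α)`, the identity `cos x = (e^{ix} + e^{-ix}) / 2`
writes `L(θ)` as a sum of two rank-one matrices, `(w u ⊗ u⁻¹ + w⁻¹ u⁻¹ ⊗ u) / 2N`, i.e. as a product
`A B` with `A : N × 2` and `B : 2 × N`. Since `X^2 χ(A B) = X^N χ(B A)`, the characteristic
polynomial is `X^(N-2)` times that of the `2 × 2` matrix `B A`, whose trace is
`(w + w⁻¹) / 2 = cos α` and whose determinant is `(1 - |u ⬝ u|² / N²) / 4 = (1 - R₂²) / 4`,
because `u⁻¹ = conj u` on the unit circle. -/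

open Polynomial Matrix

namespace Matrix

variable {R n : Type*}

theorem vecMulVec_add_vecMulVec_eq_mul [CommRing R] (a b c d : n → R) :
    vecMulVec a b + vecMulVec c d = (of fun i k => ![a i, c i] k) * of ![b, d] := by
  ext i j
  simp [mul_apply, vecMulVec_apply, Fin.sum_univ_two]

theorem charpoly_vecMulVec_add_vecMulVec [CommRing R] [Nontrivial R] [Fintype n] [DecidableEq n]
    (a b c d : n → R) (h : 2 ≤ Fintype.card n) :
    (vecMulVec a b + vecMulVec c d).charpoly = X ^ (Fintype.card n - 2) *
      (X ^ 2 - C (b ⬝ᵥ a + d ⬝ᵥ c) * X + C (b ⬝ᵥ a * d ⬝ᵥ c - b ⬝ᵥ c * d ⬝ᵥ a)) := by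
  rw [vecMulVec_add_vecMulVec_eq_mul, charpoly_mul_comm_of_le _ _ (by simpa using h),
    Fintype.card_fin, charpoly_fin_two, trace_fin_two, det_fin_two]
  simp [mul_apply, dotProduct, mul_comm]

theorem inv_dotProduct_self [Field R] [Fintype n] (u : n → R) (hu : ∀ i, u i ≠ 0) :
    u⁻¹ ⬝ᵥ u = Fintype.card n := by
  simp [dotProduct, hu]

end Matrix

open Complex

theorem Complex.dotProduct_self_mul_inv_dotProduct_inv {n : Type*} [Fintype n] (u : n → ℂ)
    (hu : ∀ i, ‖u i‖ = 1) : u ⬝ᵥ u * (u⁻¹ ⬝ᵥ u⁻¹) = ‖u ⬝ᵥ u‖ ^ 2 := by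
  rw [← mul_conj', dotProduct, dotProduct, map_sum]
  simp only [Pi.inv_apply, map_mul, RCLike.inv_eq_conj (hu _)]

theorem Complex.ofReal_cos_eq_exp (x : ℝ) :
    (Real.cos x : ℂ) = (cexp (I * x) + (cexp (I * x))⁻¹) / 2 := by
  rw [ofReal_cos, cos, ← exp_neg]; ring_nf

theorem kuramotoSakaguchi_map_ofReal_eq_vecMulVec {N : ℕ} (θ : Fin N → ℝ) (α : ℝ)
    (L : Matrix (Fin N) (Fin N) ℝ) (hL : ∀ i j, L i j = (1 / N) * Real.cos (θ i - θ j + α)) :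
    L.map ofReal =
      vecMulVec ((cexp (I * α) / (2 * N)) • fun j => cexp (I * θ j)) (fun j => cexp (I * θ j))⁻¹ +
      vecMulVec (((cexp (I * α))⁻¹ / (2 * N)) • (fun j => cexp (I * θ j))⁻¹)
        (fun j => cexp (I * θ j)) := by
  ext i j
  simp only [map_apply, hL, Matrix.add_apply, vecMulVec_apply, Pi.smul_apply, Pi.inv_apply,
    smul_eq_mul, ofReal_mul, ofReal_cos_eq_exp]
  push_cast
  simp only [mul_add, mul_sub, exp_add, exp_sub]
  field_simp

theorem kuramoto_sakaguchi_charpoly_factorization_general (N : ℕ) (hN : 2 ≤ N) (θ : Fin N → ℝ) (α : ℝ)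
    (L : Matrix (Fin N) (Fin N) ℝ)
    (hL : ∀ i j, L i j = (1 / N) * Real.cos (θ i - θ j + α))
    (R₂ : ℝ)
    (hR₂ : R₂ = ‖((1 / N) * ∑ j, Complex.exp (Complex.I * (2 * (θ j : ℂ))) : ℂ)‖) :
    (L.map Complex.ofReal).charpoly =
      X ^ (N - 2) *
        (X ^ 2 - C ((Real.cos α : ℂ)) * X + C (((1 - R₂ ^ 2) / 4 : ℝ) : ℂ)) := by
  rw [kuramotoSakaguchi_map_ofReal_eq_vecMulVec θ α L hL,
    charpoly_vecMulVec_add_vecMulVec _ _ _ _ (by simpa using hN), Fintype.card_fin]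
  set u : Fin N → ℂ := fun j => cexp (I * θ j)
  set w := cexp (I * α)
  have hN0 : (N : ℂ) ≠ 0 := Nat.cast_ne_zero.2 (by omega)
  have hw : w ≠ 0 := exp_ne_zero _
  have hR₂u : (R₂ : ℂ) = ‖u ⬝ᵥ u‖ / N := by
    have hsq (j : Fin N) : cexp (I * (2 * (θ j : ℂ))) = u j * u j := by
      rw [← exp_add]; ring_nf
    simp only [hR₂, hsq, norm_mul, one_div, norm_inv, norm_natCast, dotProduct]
    push_cast
    ring
  have hnorm := dotProduct_self_mul_inv_dotProduct_inv u fun j => norm_exp_I_mul_ofReal _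
  simp only [dotProduct_smul, inv_dotProduct_self u fun j => exp_ne_zero _,
    dotProduct_comm u u⁻¹, Fintype.card_fin, smul_eq_mul]
  congr 4
  · rw [show (Real.cos α : ℂ) = (w + w⁻¹) / 2 from ofReal_cos_eq_exp α]
    field_simp
  · push_cast
    rw [hR₂u, div_pow, ← hnorm]
    field_simp
    ring

/-- For `N ≥ 2` and a 1-splay phase configuration `θ` (`Σⱼ exp(i θⱼ) = 0`), the characteristic
polynomial over `ℂ` of the Kuramoto–Sakaguchi Jacobian `L(θ)` factors as
`X^(N-2) · (X² - cos α · X + (1 - R₂(θ)²)/4)`. -/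
theorem kuramoto_sakaguchi_charpoly_factorization (N : ℕ) (hN : 2 ≤ N) (θ : Fin N → ℝ) (α : ℝ)
    (hsplay : ∑ j, Complex.exp (Complex.I * (θ j : ℂ)) = 0)
    (L : Matrix (Fin N) (Fin N) ℝ)
    (hL : ∀ i j, L i j = (1 / N) * Real.cos (θ i - θ j + α))
    (R₂ : ℝ)
    (hR₂ : R₂ = ‖((1 / N) * ∑ j, Complex.exp (Complex.I * (2 * (θ j : ℂ))) : ℂ)‖) :
    (L.map Complex.ofReal).charpoly =
      X ^ (N - 2) *
        (X ^ 2 - C ((Real.cos α : ℂ)) * X + C (((1 - R₂ ^ 2) / 4 : ℝ) : ℂ)) :=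
  kuramoto_sakaguchi_charpoly_factorization_general N hN θ α L hL R₂ hR₂
end

section
/- Let N ≥ 2, α ∈ ℝ, and θ ∈ ℝ^N with Σ_{j=1}^N exp(i·θ_j) = 0 and R₂(θ) < 1, and let L(θ) be the Kuramoto–Sakaguchi Jacobian. Then every nonzero complex eigenvalue of L(θ) has negative real part if and only if cos α < 0. -/
/-!
Writing `vⱼ = (cos θⱼ, sin θⱼ)`, the addition formula gives `L = (1/N) V Rₐ Vᵀ` with `V` the
`N × 2` matrix of rows `vⱼ` and `Rₐ` a rotation matrix. Hence `L` has rank at most two, and its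
nonzero eigenvalues are those of the `2 × 2` matrix `(1/N) VᵀV Rₐ`. The Gram matrix `(1/N) VᵀV`
has trace `1` and determinant `(1 - R₂²)/4`, so that matrix has characteristic polynomial
`z² - cos α · z + (1 - R₂²)/4`. Its constant term is positive, so both roots lie in the open left
half-plane exactly when their sum `cos α` is negative.
-/

open Polynomial Matrix

lemma quadratic_roots_re_neg_iff {p q : ℝ} (hq : 0 < q) :
    (∀ z : ℂ, z ^ 2 - p * z + q = 0 → z.re < 0) ↔ p < 0 := by
  constructor
  · intro h
    have hdeg : (X ^ 2 - C (p : ℂ) * X + C (q : ℂ)).natDegree = 2 := by compute_degree!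
    obtain ⟨z, hz⟩ := Complex.exists_root (natDegree_pos_iff_degree_pos.mp (hdeg ▸ two_pos))
    simp only [IsRoot.def, eval_add, eval_sub, eval_mul, eval_pow, eval_X, eval_C] at hz
    have hz' : (p - z) ^ 2 - p * (p - z) + q = 0 := by linear_combination hz
    have := h (p - z) hz'
    simp only [Complex.sub_re, Complex.ofReal_re] at this
    linarith [h z hz]
  · intro hp z hz
    have hre := congrArg Complex.re hz
    have him := congrArg Complex.im hz
    simp only [pow_two, Complex.add_re, Complex.sub_re, Complex.mul_re, Complex.ofReal_re,
      Complex.ofReal_im, zero_mul, sub_zero, Complex.zero_re, Complex.add_im, Complex.sub_im,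
      Complex.mul_im, add_zero, Complex.zero_im] at hre him
    rcases eq_or_ne z.im 0 with hy | hy
    · rw [hy] at hre
      nlinarith
    · have : z.im * (2 * z.re - p) = 0 := by linear_combination him
      linarith [(mul_eq_zero.mp this).resolve_left hy]

noncomputable section PhaseMatrices

variable {ι : Type*}

def phasorMatrix (θ : ι → ℝ) : Matrix ι (Fin 2) ℝ :=
  of fun j => ![Real.cos (θ j), Real.sin (θ j)]

def phaseLagMatrix (α : ℝ) : Matrix (Fin 2) (Fin 2) ℝ :=
  !![Real.cos α, Real.sin α; -Real.sin α, Real.cos α]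

lemma cos_sub_add_eq_phasorMatrix_mul (θ : ι → ℝ) (α : ℝ) (i j : ι) :
    Real.cos (θ i - θ j + α) = (phasorMatrix θ * phaseLagMatrix α * (phasorMatrix θ)ᵀ) i j := by
  simp only [Real.cos_add, Real.cos_sub, Real.sin_sub, phasorMatrix, phaseLagMatrix, mul_apply,
    of_apply, cons_val', cons_val_fin_one, Fin.sum_univ_two, Fin.isValue, cons_val_zero,
    cons_val_one, transpose_apply, mul_neg]
  ring

lemma det_phaseLagMatrix (α : ℝ) : (phaseLagMatrix α).det = 1 := by
  rw [phaseLagMatrix, det_fin_two_of]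
  linear_combination Real.cos_sq_add_sin_sq α

variable [Fintype ι]

lemma card_eq_sum_cos_sq_add_sin_sq (θ : ι → ℝ) :
    (Fintype.card ι : ℝ) = ∑ j, Real.cos (θ j) ^ 2 + ∑ j, Real.sin (θ j) ^ 2 := by
  simp [← Finset.sum_add_distrib, Real.cos_sq_add_sin_sq]

lemma trace_gram_phasorMatrix_mul_phaseLagMatrix (θ : ι → ℝ) (α : ℝ) :
    ((phasorMatrix θ)ᵀ * phasorMatrix θ * phaseLagMatrix α).trace =
      Fintype.card ι * Real.cos α := by
  rw [card_eq_sum_cos_sq_add_sin_sq]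
  simp only [trace_fin_two, phasorMatrix, phaseLagMatrix, mul_apply, Fin.sum_univ_two,
    transpose_apply, of_apply, Fin.isValue, cons_val_zero, cons_val', cons_val_fin_one,
    cons_val_one, mul_neg]
  simp only [mul_comm (Real.sin _) (Real.cos _), ← sq]
  ring

lemma det_gram_phasorMatrix (θ : ι → ℝ) :
    4 * ((phasorMatrix θ)ᵀ * phasorMatrix θ).det =
      Fintype.card ι ^ 2 - ‖∑ j, Complex.exp (Complex.I * (2 * (θ j : ℂ)))‖ ^ 2 := by
  have hexp : ∀ j, Complex.exp (Complex.I * (2 * (θ j : ℂ))) =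
      Complex.exp (((2 * θ j : ℝ) : ℂ) * Complex.I) := fun j => by push_cast; ring_nf
  rw [card_eq_sum_cos_sq_add_sin_sq]
  simp only [hexp, Complex.sq_norm, Complex.normSq_apply, Complex.re_sum, Complex.im_sum,
    Complex.exp_ofReal_mul_I_re, Complex.exp_ofReal_mul_I_im, Real.cos_two_mul', Real.sin_two_mul,
    det_fin_two, mul_apply, phasorMatrix, transpose_apply, of_apply,
    Finset.sum_sub_distrib, Fin.isValue, cons_val_zero, cons_val_one, cons_val_fin_one]
  simp only [mul_comm (Real.sin _) (Real.cos _), ← sq, mul_assoc (2 : ℝ), ← Finset.mul_sum]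
  ring

end PhaseMatrices

theorem kuramoto_sakaguchi_splay_stability_general (N : ℕ) (hN : 2 ≤ N) (θ : Fin N → ℝ) (α : ℝ)
    (L : Matrix (Fin N) (Fin N) ℝ)
    (hL : ∀ i j, L i j = (1 / N) * Real.cos (θ i - θ j + α))
    (R₂ : ℝ)
    (hR₂ : R₂ = ‖((1 / N) * ∑ j, Complex.exp (Complex.I * (2 * (θ j : ℂ))) : ℂ)‖)
    (hR₂lt : R₂ < 1) :
    (∀ z : ℂ, z ≠ 0 → (L.map Complex.ofReal).charpoly.IsRoot z → z.re < 0) ↔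
      Real.cos α < 0 := by
  set S := ∑ j, Complex.exp (Complex.I * (2 * (θ j : ℂ)))
  set V := phasorMatrix θ
  have hLV : L = ((1 / N : ℝ) • (V * phaseLagMatrix α)) * Vᵀ := by
    ext i j
    rw [hL, cos_sub_add_eq_phasorMatrix_mul, Matrix.smul_mul, Matrix.smul_apply, smul_eq_mul]
  set K := (1 / N : ℝ) • (Vᵀ * V * phaseLagMatrix α) with hK
  have hchar : L.charpoly = X ^ (N - 2) * K.charpoly := by
    rw [hLV, charpoly_mul_comm_of_le _ _ (by simpa using hN), Fintype.card_fin, Fintype.card_fin,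
      Matrix.mul_smul, ← Matrix.mul_assoc]
  have hN0 : (N : ℝ) ≠ 0 := by positivity
  have htrace : K.trace = Real.cos α := by
    rw [hK, trace_smul, trace_gram_phasorMatrix_mul_phaseLagMatrix, Fintype.card_fin, smul_eq_mul]
    field_simp
  have hdet : K.det = (1 - R₂ ^ 2) / 4 := by
    have hgram := det_gram_phasorMatrix θ
    rw [Fintype.card_fin] at hgram
    rw [hK, det_smul, det_mul, det_phaseLagMatrix, Fintype.card_fin, hR₂, norm_mul, norm_div,
      norm_one, Complex.norm_natCast]
    field_simp
    linear_combination hgram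
  have hq : 0 < (1 - R₂ ^ 2) / 4 := by nlinarith [hR₂ ▸ norm_nonneg ((1 / N : ℂ) * S)]
  rw [← quadratic_roots_re_neg_iff hq]
  refine forall_congr' fun z => ?_
  rcases eq_or_ne z 0 with rfl | hz
  · have hq' : (((1 - R₂ ^ 2) / 4 : ℝ) : ℂ) ≠ 0 := mod_cast hq.ne'
    exact iff_of_true (fun h => absurd rfl h) fun h => absurd (by linear_combination h) hq'
  · rw [show L.map Complex.ofReal = L.map Complex.ofRealHom from rfl, charpoly_map, hchar,
      Polynomial.map_mul, root_mul, charpoly_fin_two, htrace, hdet]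
    simp [hz]

/-- For `N ≥ 2`, a 1-splay configuration `θ` (`Σⱼ exp(i θⱼ) = 0`) with `R₂(θ) < 1`, every
nonzero complex eigenvalue of the Kuramoto–Sakaguchi Jacobian `L(θ)` has negative real part
if and only if `cos α < 0`. -/
theorem kuramoto_sakaguchi_splay_stability (N : ℕ) (hN : 2 ≤ N) (θ : Fin N → ℝ) (α : ℝ)
    (hsplay : ∑ j, Complex.exp (Complex.I * (θ j : ℂ)) = 0)
    (L : Matrix (Fin N) (Fin N) ℝ)
    (hL : ∀ i j, L i j = (1 / N) * Real.cos (θ i - θ j + α))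
    (R₂ : ℝ)
    (hR₂ : R₂ = ‖((1 / N) * ∑ j, Complex.exp (Complex.I * (2 * (θ j : ℂ))) : ℂ)‖)
    (hR₂lt : R₂ < 1) :
    (∀ z : ℂ, z ≠ 0 → (L.map Complex.ofReal).charpoly.IsRoot z → z.re < 0) ↔
      Real.cos α < 0 :=
  kuramoto_sakaguchi_splay_stability_general N hN θ α L hL R₂ hR₂ hR₂lt
end

section
/- Let N ≥ 2, let L be an N×N complex matrix whose characteristic polynomial is divisible by X^{N−2}, set a = Tr(L) and b = Tr(L²), and let γ ∈ ℂ. Consider the 2N×2N block matrix J = [[0, I_N], [L, −γ·I_N]]. Then for every μ ∈ ℂ, det( μ·I_{2N} − J ) = ( μ·(μ+γ) )^{N−2} · ( μ⁴ + 2γμ³ + (γ² − a)μ² − γ·a·μ + (a² − b)/2 ). -/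
open Polynomial Matrix

/-!
Since `X + γ` is a non-zero-divisor in `ℂ[X]`, the Schur complement of the block `(X + γ) • 1`
of the characteristic matrix of `J` gives `χ_J = χ_L (X (X + γ))`. By hypothesis
`χ_L = X ^ (N - 2) (X ² + c₁ X + c₀)`, and both coefficients are traces: `c₁ = -Tr L`, and
`X² - L² = (X - L)(X + L)` gives `χ_{L²}(X²) = ± χ_L(X) χ_L(-X)`, which forces
`χ_{L²} = X ^ (N - 2) (X² + (2 c₀ - c₁²) X + c₀²)`, so `Tr L² = c₁² - 2 c₀`.
-/

namespace Polynomial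

theorem Monic.exists_eq_X_pow_mul_quadratic {R : Type*} [CommRing R] [Nontrivial R]
    {p : R[X]} {k : ℕ} (hp : p.Monic) (hdeg : p.natDegree = k + 2) (hdvd : X ^ k ∣ p) :
    ∃ c₁ c₀ : R, p = X ^ k * (X ^ 2 + C c₁ * X + C c₀) := by
  obtain ⟨q, rfl⟩ := hdvd
  have hq : q.Monic := (monic_X_pow k).of_mul_monic_left hp
  have hq2 : q.natDegree = 2 := by
    rw [(monic_X_pow k).natDegree_mul hq, natDegree_X_pow] at hdeg
    omega
  refine ⟨q.coeff 1, q.coeff 0, ?_⟩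
  rw [hq.as_sum, hq2]
  simp [Finset.sum_range_succ, add_comm, add_left_comm]

end Polynomial

namespace Matrix

variable {n R : Type*} [Fintype n] [DecidableEq n] [CommRing R]

theorem charpoly_comp_eq_det (M : Matrix n n R) (p : R[X]) :
    M.charpoly.comp p = det (p • (1 : Matrix n n R[X]) - M.map C) := by
  rw [charpoly, ← coe_compRingHom_apply, RingHom.map_det]
  congr 1
  ext i j
  obtain rfl | hij := eq_or_ne i j <;> simp [*]

theorem charpoly_mul_self_comp_X_sq (M : Matrix n n R) :
    (M * M).charpoly.comp (X ^ 2) =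
      (-1) ^ Fintype.card n * M.charpoly * M.charpoly.comp (-X) := by
  have hfactor : (X ^ 2 : R[X]) • (1 : Matrix n n R[X]) - (M * M).map C =
      ((X : R[X]) • 1 - M.map C) * -((-X : R[X]) • 1 - M.map C) := by
    simp only [Matrix.map_mul, neg_smul, neg_sub, sub_neg_eq_add, sub_mul, mul_add,
      Matrix.smul_mul, Matrix.mul_smul, Matrix.one_mul, Matrix.mul_one, smul_smul, sq]
    abel
  rw [charpoly_comp_eq_det, charpoly_comp_eq_det, hfactor, det_mul, det_neg,
    ← charpoly_comp_eq_det, comp_X]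
  ring

theorem det_fromBlocks_smul_one₂₂ {d : R} (hd : IsRegular d) (A B C : Matrix n n R) :
    det (fromBlocks A B C (d • 1)) = det (d • A - B * C) := by
  -- right multiplication by a block triangular matrix of determinant `d ^ card n` clears `C`
  have hmul : fromBlocks A B C (d • 1) * fromBlocks (d • 1) 0 (-C) 1 =
      fromBlocks (d • A - B * C) B 0 (d • 1) := by
    simp [fromBlocks_multiply, sub_eq_add_neg]
  have := congrArg det hmul
  rw [det_mul, det_fromBlocks_zero₁₂, det_fromBlocks_zero₂₁, det_smul, det_one] at this
  simpa using (hd.pow (Fintype.card n)).right.eq_iff.mp (by simpa using this)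

theorem charpoly_fromBlocks_zero_one (L : Matrix n n R) (c : R) :
    (fromBlocks 0 1 L (c • 1)).charpoly = L.charpoly.comp (X * (X - C c)) := by
  have hblocks : charmatrix (fromBlocks 0 1 L (c • 1)) =
      fromBlocks ((X : R[X]) • 1) (-1) (-L.map C) ((X - C c) • 1) := by
    ext (i | i) (j | j) : 2 <;> by_cases h : i = j <;> simp [h]
  rw [charpoly, hblocks, det_fromBlocks_smul_one₂₂ (monic_X_sub_C c).isRegular,
    charpoly_comp_eq_det]
  congr 1
  simp [smul_smul, mul_comm, sub_eq_add_neg]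

section Quadratic

variable [Nontrivial R] {M : Matrix n n R} {k : ℕ} {c₁ c₀ : R}

theorem card_eq_of_charpoly_eq_X_pow_mul
    (h : M.charpoly = X ^ k * (X ^ 2 + C c₁ * X + C c₀)) :
    Fintype.card n = k + 2 := by
  rw [← M.charpoly_natDegree_eq_dim, h]
  compute_degree!

theorem trace_eq_of_charpoly_eq_X_pow_mul
    (h : M.charpoly = X ^ k * (X ^ 2 + C c₁ * X + C c₀)) :
    M.trace = -c₁ := by
  have hcard := card_eq_of_charpoly_eq_X_pow_mul h
  have : Nonempty n := Fintype.card_pos_iff.mp (by omega)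
  rw [trace_eq_neg_charpoly_coeff, hcard, h, show k + 2 - 1 = 1 + k by omega, coeff_X_pow_mul]
  simp

theorem charpoly_mul_self_of_charpoly_eq_X_pow_mul
    (h : M.charpoly = X ^ k * (X ^ 2 + C c₁ * X + C c₀)) :
    (M * M).charpoly = X ^ k * (X ^ 2 + C (2 * c₀ - c₁ ^ 2) * X + C (c₀ ^ 2)) := by
  apply expand_injective two_pos
  rw [expand_eq_comp_X_pow, expand_eq_comp_X_pow, charpoly_mul_self_comp_X_sq, h,
    card_eq_of_charpoly_eq_X_pow_mul h]
  have hsign : ((-1 : R[X]) ^ k) ^ 2 = 1 := by rw [← pow_mul, pow_mul', neg_one_sq, one_pow]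
  simp only [mul_comp, pow_comp, add_comp, X_comp, C_comp]
  simp only [neg_pow (X : R[X]), map_sub, map_mul, map_pow, map_ofNat]
  linear_combination (X ^ (2 * k) * (X ^ 2 + C c₁ * X + C c₀) * (X ^ 2 - C c₁ * X + C c₀)) * hsign

end Quadratic

end Matrix

/-- For `N ≥ 2`, an `N × N` complex matrix `L` whose characteristic polynomial is divisible by
`X^(N-2)`, `a = Tr L`, `b = Tr L²` and `γ ∈ ℂ`, the inertia block matrix
`J = [[0, I], [L, -γ I]]` satisfies
`det(μ I₂ₙ - J) = (μ(μ+γ))^(N-2) (μ⁴ + 2γμ³ + (γ² - a)μ² - γ a μ + (a² - b)/2)`. -/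
theorem inertia_splay_charpoly_factorization (N : ℕ) (hN : 2 ≤ N)
    (L : Matrix (Fin N) (Fin N) ℂ)
    (hdvd : (X : ℂ[X]) ^ (N - 2) ∣ L.charpoly)
    (a b : ℂ) (ha : a = L.trace) (hb : b = (L * L).trace) (γ : ℂ)
    (J : Matrix (Fin N ⊕ Fin N) (Fin N ⊕ Fin N) ℂ)
    (hJ : J = Matrix.fromBlocks 0 1 L ((-γ) • 1)) :
    ∀ μ : ℂ,
      (μ • (1 : Matrix (Fin N ⊕ Fin N) (Fin N ⊕ Fin N) ℂ) - J).det =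
        (μ * (μ + γ)) ^ (N - 2) *
          (μ ^ 4 + 2 * γ * μ ^ 3 + (γ ^ 2 - a) * μ ^ 2 - γ * a * μ + (a ^ 2 - b) / 2) := by
  intro μ
  obtain ⟨k, rfl⟩ : ∃ k, N = k + 2 := ⟨N - 2, by omega⟩
  rw [Nat.add_sub_cancel] at hdvd ⊢
  obtain ⟨c₁, c₀, hχ⟩ := L.charpoly_monic.exists_eq_X_pow_mul_quadratic (by simp) hdvd
  have hc₁ : c₁ = -a := by rw [ha, trace_eq_of_charpoly_eq_X_pow_mul hχ, neg_neg]
  have hχ_sq := charpoly_mul_self_of_charpoly_eq_X_pow_mul hχ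
  have hc₀ : c₀ = (a ^ 2 - b) / 2 := by
    rw [hb, trace_eq_of_charpoly_eq_X_pow_mul hχ_sq, hc₁]
    ring
  rw [hJ, smul_one_eq_diagonal, ← scalar_apply, ← eval_charpoly, charpoly_fromBlocks_zero_one,
    eval_comp, hχ, hc₁, hc₀]
  simp only [eval_mul, eval_pow, eval_add, eval_sub, eval_X, eval_C]
  ring
end

section
/- Let L be an N×N complex matrix and γ ∈ ℂ. Then μ ∈ ℂ is an eigenvalue of the 2N×2N block matrix [[0, I_N], [L, −γ·I_N]] if and only if μ² + γ·μ is an eigenvalue of L. -/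
/-!
The characteristic matrix of `[[0, I], [L, -γ I]]` is `[[X I, -I], [-L, (X + γ) I]]`. A unimodular
row operation turns its determinant into `det ((X² + γ X) I - L)`, so the characteristic polynomial
of the block matrix is that of `L` composed with `X² + γ X`, over any commutative ring.
-/

open Polynomial Matrix

namespace Matrix

variable {n R : Type*} [Fintype n] [DecidableEq n] [CommRing R]

theorem det_fromBlocks_neg_one₁₂ (A C D : Matrix n n R) :
    (fromBlocks A (-1 : Matrix n n R) C D).det = (C + D * A).det := by
  -- Left multiplication by this unimodular matrix puts an identity block in the lower right.
  have hP : (fromBlocks (1 : Matrix n n R) 1 (-1 : Matrix n n R) 0).det = 1 := by simp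
  calc (fromBlocks A (-1) C D).det
      = (fromBlocks (1 : Matrix n n R) 1 (-1 : Matrix n n R) 0 * fromBlocks A (-1) C D).det := by
        rw [det_mul, hP, one_mul]
    _ = (fromBlocks (A + C) (D - 1) (-A) 1).det := by
        rw [fromBlocks_multiply]
        congr 1
        simp [sub_eq_neg_add]
    _ = (C + D * A).det := by
        rw [det_fromBlocks_one₂₂]
        congr 1
        noncomm_ring

theorem charmatrix_smul_one (a : R) :
    charmatrix (a • 1 : Matrix n n R) = scalar n (X - C a) := by
  ext i j
  by_cases h : i = j <;> simp [h]

theorem charmatrix_map_comp (L : Matrix n n R) (p : R[X]) :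
    (charmatrix L).map (fun q ↦ q.comp p) = scalar n p - L.map C := by
  ext i j
  by_cases h : i = j <;> simp [h]

theorem charpoly_fromBlocks_zero_one_smul_one (L : Matrix n n R) (γ : R) :
    (fromBlocks 0 1 L ((-γ) • 1)).charpoly = L.charpoly.comp (X ^ 2 + C γ * X) := by
  have h0 : charmatrix (0 : Matrix n n R) = scalar n X := by simp
  rw [charpoly, charmatrix_fromBlocks, h0, charmatrix_smul_one, Matrix.map_one _ C_0 C_1,
    det_fromBlocks_neg_one₁₂, charpoly, ← coe_compRingHom_apply, RingHom.map_det,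
    RingHom.mapMatrix_apply, coe_compRingHom, charmatrix_map_comp,
    ← map_mul, neg_add_eq_sub, C_neg, sub_neg_eq_add]
  congr 3
  ring

end Matrix

/-- For an `N × N` complex matrix `L` and `γ ∈ ℂ`, `μ` is an eigenvalue of the block matrix
`[[0, I], [L, -γ I]]` if and only if `μ² + γ μ` is an eigenvalue of `L`. -/
theorem inertia_block_eigenvalue_iff (N : ℕ) (L : Matrix (Fin N) (Fin N) ℂ) (γ : ℂ)
    (J : Matrix (Fin N ⊕ Fin N) (Fin N ⊕ Fin N) ℂ)
    (hJ : J = Matrix.fromBlocks 0 1 L ((-γ) • 1)) :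
    ∀ μ : ℂ, J.charpoly.IsRoot μ ↔ L.charpoly.IsRoot (μ ^ 2 + γ * μ) := by
  intro μ
  rw [hJ, charpoly_fromBlocks_zero_one_smul_one, IsRoot.def, IsRoot.def, eval_comp]
  simp
end

section
/- Let K < N, let L be an N×N complex matrix, B an N×K complex matrix, C a K×N complex matrix, and ε ∈ ℂ. Then the polynomial det( (X + ε)·(X·I_N − L) − B·C ) ∈ ℂ[X] is divisible by (X + ε)^{N−K}; that is, −ε is a root of this determinant polynomial of multiplicity at least N − K. -/
open Polynomial Matrix

/-!
With `p = X + ε`, the two factorizations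
`[p•A, B; C, 1] · diag(1, p•1) = diag(p•1, 1) · [A, B; C, p•1]`
together with the Schur complement `det [p•A, B; C, 1] = det (p•A - B*C)` give
`p ^ K * det (p•A - B*C) = p ^ N * det [A, B; C, p•1]`.
Since `p` is not a zero divisor in `ℂ[X]`, `p ^ K` cancels.
-/

namespace Matrix

variable {m n R : Type*} [Fintype m] [Fintype n] [DecidableEq m] [DecidableEq n] [CommRing R]

theorem pow_card_mul_det_smul_sub_mul (p : R) (A : Matrix n n R) (B : Matrix n m R)
    (C : Matrix m n R) :
    p ^ Fintype.card m * (p • A - B * C).det =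
      p ^ Fintype.card n * (fromBlocks A B C (p • 1)).det := by
  have hfactor : fromBlocks (p • A) B C 1 * fromBlocks 1 0 0 (p • 1) =
      fromBlocks (p • (1 : Matrix n n R)) 0 0 1 * fromBlocks A B C (p • 1) := by
    simp [fromBlocks_multiply]
  calc p ^ Fintype.card m * (p • A - B * C).det
      = (fromBlocks (p • A) B C 1 * fromBlocks 1 0 0 (p • 1)).det := by
        rw [det_mul, det_fromBlocks_one₂₂, det_fromBlocks_zero₂₁, det_smul, det_one, det_one]
        ring
    _ = p ^ Fintype.card n * (fromBlocks A B C (p • 1)).det := by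
        rw [hfactor, det_mul, det_fromBlocks_zero₂₁, det_smul, det_one, det_one, mul_one, mul_one]

theorem pow_sub_dvd_det_smul_sub_mul {p : R} (hp : IsLeftRegular p) (A : Matrix n n R)
    (B : Matrix n m R) (C : Matrix m n R) :
    p ^ (Fintype.card n - Fintype.card m) ∣ (p • A - B * C).det := by
  obtain hnm | hmn := le_total (Fintype.card n) (Fintype.card m)
  · simp [Nat.sub_eq_zero_of_le hnm]
  refine ⟨(fromBlocks A B C (p • 1)).det, hp.pow (Fintype.card m) ?_⟩
  dsimp only
  rw [pow_card_mul_det_smul_sub_mul, ← mul_assoc, ← pow_add, Nat.add_sub_cancel' hmn]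

end Matrix

theorem adaptive_schur_root_multiplicity_general (N K : ℕ)
    (L : Matrix (Fin N) (Fin N) ℂ) (B : Matrix (Fin N) (Fin K) ℂ)
    (Cm : Matrix (Fin K) (Fin N) ℂ) (ε : ℂ) :
    ((X : ℂ[X]) + C ε) ^ (N - K) ∣
      Matrix.det
        (((X : ℂ[X]) + C ε) •
            ((X : ℂ[X]) • (1 : Matrix (Fin N) (Fin N) ℂ[X]) - L.map (fun x => C x))
          - (B * Cm).map (fun x => C x)) := by
  have hp : IsLeftRegular ((X : ℂ[X]) + C ε) := (IsRegular.of_ne_zero (X_add_C_ne_zero ε)).left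
  simpa only [Fintype.card_fin, Matrix.map_mul] using pow_sub_dvd_det_smul_sub_mul hp
    ((X : ℂ[X]) • (1 : Matrix (Fin N) (Fin N) ℂ[X]) - L.map (fun x => C x))
    (B.map C) (Cm.map C)

/-- For `K < N`, complex matrices `L : N × N`, `B : N × K`, `C : K × N` and `ε ∈ ℂ`, the
polynomial `det((X + ε)(X Iₙ - L) - B C) ∈ ℂ[X]` is divisible by `(X + ε)^(N-K)`, i.e. `-ε`
is a root of multiplicity at least `N - K`. -/
theorem adaptive_schur_root_multiplicity (N K : ℕ) (hK : K < N)
    (L : Matrix (Fin N) (Fin N) ℂ) (B : Matrix (Fin N) (Fin K) ℂ)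
    (Cm : Matrix (Fin K) (Fin N) ℂ) (ε : ℂ) :
    ((X : ℂ[X]) + C ε) ^ (N - K) ∣
      Matrix.det
        (((X : ℂ[X]) + C ε) •
            ((X : ℂ[X]) • (1 : Matrix (Fin N) (Fin N) ℂ[X]) - L.map (fun x => C x))
          - (B * Cm).map (fun x => C x)) :=
  adaptive_schur_root_multiplicity_general N K L B Cm ε
end

section
/- Let N ≥ 2 and K ≥ N, let L be an N×N complex matrix, B an N×K complex matrix, C a K×N complex matrix, and ε ∈ ℂ. Suppose there exists a linear subspace V of ℂ^N with dim V ≥ N − 2 such that L·v = 0 and C·v = 0 for all v ∈ V. Set L̃ = B·C, t = Tr(L), p = Tr(L²), s = Tr(L̃), u = Tr(L̃²), q = Tr(L·L̃), and let J be the (N+K)×(N+K) block matrix [[L, B], [C, −ε·I_K]]. Then for every μ ∈ ℂ, det( μ·I_{N+K} − J ) = (μ + ε)^{K−N} · ( μ·(μ + ε) )^{N−2} · Q(μ), where Q(μ) = μ⁴ + (2ε − t)·μ³ + ( ε² − 2ε·t + (t² − p)/2 − s )·μ² + ( t·s − q + ε·(t² − p − s) − ε²·t )·μ + ( s² − u +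 2ε·(t·s − q) + ε²·(t² − p) )/2. -/
/-!
Writing `μ I - J` in blocks, the Schur complement of the invertible block `(μ + ε) I` gives
`det (μ I - J) = (μ + ε)^K det (μ I - M)` with `M = L + (μ + ε)⁻¹ L̃`. Both `L` and `L̃ = B C`
vanish on `V`, so `M` has rank at most two and factors as `M = P Q` through `ℂ²`. Then
`χ_M = X^(N-2) χ_{QP}`, and the characteristic polynomial of the `2 × 2` matrix `QP` is determined
by `tr M` and `tr M²`. Multiplying by `(μ + ε)²` clears the denominators and produces the quartic;
the single excluded value `μ = -ε` is recovered by continuity.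
-/

open Matrix Polynomial Module

namespace Matrix

theorem exists_mul_eq_of_rank_le {K m n : Type*} [Field K] [Fintype m] [Fintype n]
    [DecidableEq n] {r : ℕ} (M : Matrix m n K) (h : M.rank ≤ r) :
    ∃ (P : Matrix m (Fin r) K) (Q : Matrix (Fin r) n K), P * Q = M := by
  set R := LinearMap.range M.mulVecLin
  obtain ⟨e, he⟩ : ∃ e : R →ₗ[K] Fin r → K, Function.Injective e :=
    finrank_le_iff_exists_linearMap.mp (by simpa [rank] using h)
  obtain ⟨g, hg⟩ := e.exists_leftInverse_of_injective (LinearMap.ker_eq_bot.mpr he)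
  refine ⟨LinearMap.toMatrix' (R.subtype ∘ₗ g),
    LinearMap.toMatrix' (e ∘ₗ M.mulVecLin.rangeRestrict), ?_⟩
  rw [← LinearMap.toMatrix'_comp, LinearMap.comp_assoc, ← LinearMap.comp_assoc _ e g, hg,
    LinearMap.id_comp, LinearMap.subtype_comp_codRestrict, ← Matrix.toLin'_apply',
    LinearMap.toMatrix'_toLin']

theorem rank_add_finrank_le_of_mulVec_eq_zero {K m n : Type*} [Field K] [Fintype n]
    (M : Matrix m n K) (V : Submodule K (n → K)) (hV : ∀ v ∈ V, M *ᵥ v = 0) :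
    M.rank + finrank K V ≤ Fintype.card n := by
  have hker : finrank K V ≤ finrank K (LinearMap.ker M.mulVecLin) :=
    Submodule.finrank_mono fun v hv => hV v hv
  have hrank_nullity := M.mulVecLin.finrank_range_add_finrank_ker
  rw [finrank_fintype_fun_eq_card] at hrank_nullity
  rw [rank]
  omega

theorem two_mul_det_fin_two {R : Type*} [CommRing R] (A : Matrix (Fin 2) (Fin 2) R) :
    2 * A.det = A.trace ^ 2 - (A * A).trace := by
  simp only [det_fin_two, trace_fin_two, mul_apply, Fin.sum_univ_two]
  ring

theorem trace_mul_self_add_smul {R n : Type*} [CommRing R] [Fintype n] (A B : Matrix n n R)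
    (c : R) : ((A + c • B) * (A + c • B)).trace
      = (A * A).trace + 2 * c * (A * B).trace + c ^ 2 * (B * B).trace := by
  simp only [add_mul, mul_add, smul_mul, Matrix.mul_smul, trace_add, trace_smul, smul_eq_mul,
    trace_mul_comm B A]
  ring

theorem charpoly_of_rank_le_two {K n : Type*} [Field K] [NeZero (2 : K)] [Fintype n]
    [DecidableEq n] (M : Matrix n n K) (hM : M.rank ≤ 2) (hn : 2 ≤ Fintype.card n) :
    M.charpoly = X ^ (Fintype.card n - 2) *
      (X ^ 2 - C M.trace * X + C ((M.trace ^ 2 - (M * M).trace) / 2)) := by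
  obtain ⟨P, Q, rfl⟩ := M.exists_mul_eq_of_rank_le hM
  have htr : (Q * P).trace = (P * Q).trace := trace_mul_comm Q P
  have htr_sq : (Q * P * (Q * P)).trace = (P * Q * (P * Q)).trace := by
    rw [Matrix.mul_assoc, trace_mul_comm]
    simp only [Matrix.mul_assoc]
  have hdet : (Q * P).det = ((P * Q).trace ^ 2 - (P * Q * (P * Q)).trace) / 2 := by
    rw [eq_div_iff two_ne_zero, mul_comm, two_mul_det_fin_two, htr, htr_sq]
  rw [charpoly_mul_comm_of_le P Q (by simpa using hn), Fintype.card_fin, charpoly_fin_two, hdet,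
    htr]

theorem det_smul_one_sub_of_rank_le_two {K n : Type*} [Field K] [NeZero (2 : K)] [Fintype n]
    [DecidableEq n] (M : Matrix n n K) (hM : M.rank ≤ 2) (hn : 2 ≤ Fintype.card n) (μ : K) :
    (μ • 1 - M).det = μ ^ (Fintype.card n - 2) *
      (μ ^ 2 - M.trace * μ + (M.trace ^ 2 - (M * M).trace) / 2) := by
  rw [smul_one_eq_diagonal, ← scalar_apply, ← eval_charpoly, charpoly_of_rank_le_two M hM hn]
  simp only [eval_mul, eval_pow, eval_X, eval_sub, eval_add, eval_C]

theorem det_smul_one_sub_fromBlocks {K m n : Type*} [Field K] [Fintype m] [Fintype n]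
    [DecidableEq m] [DecidableEq n] (L : Matrix m m K) (B : Matrix m n K) (C : Matrix n m K)
    {μ ε : K} (h : μ + ε ≠ 0) :
    (μ • (1 : Matrix (m ⊕ n) (m ⊕ n) K) - fromBlocks L B C ((-ε) • 1)).det
      = (μ + ε) ^ Fintype.card n * (μ • 1 - (L + (μ + ε)⁻¹ • (B * C))).det := by
  have hblocks : μ • (1 : Matrix (m ⊕ n) (m ⊕ n) K) - fromBlocks L B C ((-ε) • 1)
      = fromBlocks (μ • 1 - L) (-B) (-C) ((μ + ε) • 1) := by
    ext (i | i) (j | j) <;> simp [one_apply, add_smul]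
  have hinv : (μ + ε) • (1 : Matrix n n K) * ((μ + ε)⁻¹ • 1) = 1 := by
    rw [smul_mul_smul_comm, mul_inv_cancel₀ h, one_mul, one_smul]
  let _ := invertibleOfRightInverse _ _ hinv
  rw [hblocks, det_fromBlocks₂₂, invOf_eq_right_inv hinv, det_smul, det_one, mul_one,
    Matrix.mul_smul, Matrix.mul_one, Matrix.smul_mul, Matrix.neg_mul, Matrix.mul_neg, neg_neg,
    sub_sub]

end Matrix

theorem quadratic_mul_sq_eq_quartic {K : Type*} [Field K] [NeZero (2 : K)]
    (t p s u q ε μ : K) (h : μ + ε ≠ 0) :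
    (μ + ε) ^ 2 * (μ ^ 2 - (t + (μ + ε)⁻¹ * s) * μ
      + ((t + (μ + ε)⁻¹ * s) ^ 2 - (p + 2 * (μ + ε)⁻¹ * q + (μ + ε)⁻¹ ^ 2 * u)) / 2) =
    μ ^ 4 + (2 * ε - t) * μ ^ 3
      + (ε ^ 2 - 2 * ε * t + (t ^ 2 - p) / 2 - s) * μ ^ 2
      + (t * s - q + ε * (t ^ 2 - p - s) - ε ^ 2 * t) * μ
      + (s ^ 2 - u + 2 * ε * (t * s - q) + ε ^ 2 * (t ^ 2 - p)) / 2 := by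
  field_simp
  ring

/-- Let `N ≥ 2`, `K ≥ N`, with complex matrices `L : N × N`, `B : N × K`, `C : K × N`, `ε ∈ ℂ`,
and a subspace `V` of dimension at least `N - 2` with `L v = 0` and `C v = 0` for `v ∈ V`.
Setting `L̃ = B C`, `t = Tr L`, `p = Tr L²`, `s = Tr L̃`, `u = Tr L̃²`, `q = Tr(L L̃)` and
`J = [[L, B], [C, -ε Iₖ]]`, one has for every `μ ∈ ℂ`:
`det(μ I - J) = (μ+ε)^(K-N) (μ(μ+ε))^(N-2) Q(μ)` with the explicit quartic `Q`. -/
theorem adaptive_splay_full_charpoly_factorization (N K : ℕ) (hN : 2 ≤ N) (hK : N ≤ K)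
    (L : Matrix (Fin N) (Fin N) ℂ) (B : Matrix (Fin N) (Fin K) ℂ)
    (Cm : Matrix (Fin K) (Fin N) ℂ) (ε : ℂ)
    (V : Submodule ℂ (Fin N → ℂ)) (hVdim : N - 2 ≤ Module.finrank ℂ V)
    (hV : ∀ v ∈ V, L.mulVec v = 0 ∧ Cm.mulVec v = 0)
    (Lt : Matrix (Fin N) (Fin N) ℂ) (hLt : Lt = B * Cm)
    (t p s u q : ℂ)
    (ht : t = L.trace) (hp : p = (L * L).trace) (hs : s = Lt.trace)
    (hu : u = (Lt * Lt).trace) (hq : q = (L * Lt).trace)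
    (J : Matrix (Fin N ⊕ Fin K) (Fin N ⊕ Fin K) ℂ)
    (hJ : J = Matrix.fromBlocks L B Cm ((-ε) • 1)) :
    ∀ μ : ℂ,
      (μ • (1 : Matrix (Fin N ⊕ Fin K) (Fin N ⊕ Fin K) ℂ) - J).det =
        (μ + ε) ^ (K - N) * (μ * (μ + ε)) ^ (N - 2) *
          (μ ^ 4 + (2 * ε - t) * μ ^ 3
            + (ε ^ 2 - 2 * ε * t + (t ^ 2 - p) / 2 - s) * μ ^ 2
            + (t * s - q + ε * (t ^ 2 - p - s) - ε ^ 2 * t) * μ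
            + (s ^ 2 - u + 2 * ε * (t * s - q) + ε ^ 2 * (t ^ 2 - p)) / 2) := by
  subst hJ
  refine congrFun (Continuous.ext_on (dense_compl_singleton (-ε)) (by fun_prop) (by fun_prop)
    fun μ hμ => ?_)
  have hμε : μ + ε ≠ 0 := fun h => hμ (eq_neg_of_add_eq_zero_left h)
  have hrank : (L + (μ + ε)⁻¹ • Lt).rank ≤ 2 := by
    have := (L + (μ + ε)⁻¹ • Lt).rank_add_finrank_le_of_mulVec_eq_zero V fun v hv => by
      simp [hLt, add_mulVec, smul_mulVec, ← mulVec_mulVec, hV v hv]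
    rw [Fintype.card_fin] at this
    omega
  rw [det_smul_one_sub_fromBlocks L B Cm hμε, ← hLt,
    det_smul_one_sub_of_rank_le_two _ hrank (by simpa using hN), trace_mul_self_add_smul,
    trace_add, trace_smul, smul_eq_mul, ← ht, ← hs, ← hp, ← hq, ← hu,
    ← quadratic_mul_sq_eq_quartic t p s u q ε μ hμε]
  obtain ⟨a, rfl⟩ := Nat.exists_eq_add_of_le hK
  obtain ⟨b, rfl⟩ := Nat.exists_eq_add_of_le' hN
  rw [Fintype.card_fin, Fintype.card_fin, Nat.add_sub_cancel, Nat.add_sub_cancel_left, mul_pow]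
  ring
end
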